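/- There are no Ulrich partitions with exactly 4 blocks. -/

import Mathlib

/-- A list of integers is strictly decreasing. -/
def StrictDec (l : List ℤ) : Prop := l.Chain' (· > ·)

/-- A list has exactly one repeated entry: the number of distinct values is one less
than the length. -/
def OneRepeat (l : List ℤ) : Prop := l.toFinset.card + 1 = l.length

/-- Time evolution of a partition in several blocks: with `s` blocks, every entry of the
`i`-th block (0-indexed) has `t * (s - 1 - i)` subtracted from it. -/
def evolveGen (B : List (List ℤ)) (t : ℤ) : List ℤ :=
  (B.zipIdx.map (fun p => p.1.map (fun x => x - t * ((B.length - 1 - p.2 : ℕ) : ℤ)))).flatten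

/-- The dimension `N = Σ_{i<j} lᵢ lⱼ` of a partition with blocks of sizes `l₁, ..., lₛ`. -/
def dimGen (B : List (List ℤ)) : ℕ :=
  ((B.map List.length).sum ^ 2 - ((B.map List.length).map (· ^ 2)).sum) / 2

/-- A partition with several nonempty blocks is Ulrich: the concatenated sequence is strictly
decreasing, and for each `t ∈ {1, ..., N}` the evolved list has exactly one repeated entry. -/
def IsUlrichGen (B : List (List ℤ)) : Prop :=
  (∀ l ∈ B, l ≠ []) ∧ StrictDec (evolveGen B 0) ∧
    ∀ t : ℕ, 1 ≤ t → t ≤ dimGen B → OneRepeat (evolveGen B (t : ℤ))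

/-!
Write `Xᵢ` for the `i`-th block. At time `t` an entry `x ∈ Xᵢ` sits at `x - (s - 1 - i) t`, so
`x ∈ Xᵢ` and `y ∈ Xⱼ` with `i < j` meet exactly when `x - y = (j - i) t`, and each such cross
pair meets at most once. The Ulrich condition says that at every time `t ∈ [1, N]` exactly one
cross pair meets. There are exactly `N` cross pairs, so by pigeonhole every cross pair meets at
some integer time in `[1, N]`, and distinct cross pairs meet at distinct times.

For four blocks this is impossible. A pair `x ∈ Xᵢ`, `y ∈ Xⱼ` with a block between them, split
through any `z` of that block, meets at a weighted average of the times of `(x, z)` and `(z, y)`;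
at the extreme times `1` and `N` these would coincide, so those times are taken by adjacent blocks.
Pairs two blocks apart have even differences, hence all adjacent differences have one parity,
which time `1` makes odd; so `N` is odd and the even times `2` and `N - 1` are taken by pairs
from `(X₀, X₂)` or `(X₁, X₃)`. Mixed kinds force `N ≤ 5`. Two pairs from `(X₀, X₂)`, split
through one `b ∈ X₁`, push some pair from `(X₂, X₃)` to a time already taken; two pairs from
`(X₁, X₃)` are the mirror image of this under `x ↦ -x`, which reverses the order of the blocks.
-/

open Finset

namespace Finset

variable {α β : Type*}

theorem sq_sum_range {R : Type*} [CommSemiring R] (a : ℕ → R) (n : ℕ) :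
    (∑ i ∈ range n, a i) ^ 2 =
      ∑ i ∈ range n, a i ^ 2 + 2 * ∑ j ∈ range n, ∑ i ∈ range j, a i * a j := by
  induction n with
  | zero => simp
  | succ n ih => simp only [sum_range_succ, ← sum_mul, add_sq, ih]; ring

theorem eq_or_eq_swap_of_card_image_add_one [DecidableEq α] [DecidableEq β] {s : Finset α}
    {f : α → β} (h : #(s.image f) + 1 = #s) {p q p' q' : α} (hp : p ∈ s) (hq : q ∈ s)
    (hpq : p ≠ q) (hf : f p = f q) (hp' : p' ∈ s) (hq' : q' ∈ s) (hpq' : p' ≠ q')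
    (hf' : f p' = f q') : (p' = p ∧ q' = q) ∨ (p' = q ∧ q' = p) := by
  have hinj : Set.InjOn f (s.erase q) := by
    have himage : (s.erase q).image f = s.image f := by
      refine (image_subset_image (erase_subset q s)).antisymm fun v hv => ?_
      obtain ⟨r, hr, rfl⟩ := mem_image.mp hv
      obtain rfl | hrq := eq_or_ne r q
      · exact hf ▸ mem_image_of_mem f (mem_erase.mpr ⟨hpq, hp⟩)
      · exact mem_image_of_mem f (mem_erase.mpr ⟨hrq, hr⟩)
    rw [← card_image_iff, himage, card_erase_of_mem hq]
    omega
  have hp_erase : p ∈ s.erase q := mem_erase.mpr ⟨hpq, hp⟩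
  obtain rfl | hq'q := eq_or_ne q' q
  · exact .inl ⟨hinj (mem_erase.mpr ⟨hpq', hp'⟩) hp_erase (hf'.trans hf.symm), rfl⟩
  · obtain rfl | hp'q := eq_or_ne p' q
    · exact .inr ⟨rfl, hinj (mem_erase.mpr ⟨hq'q, hq'⟩) hp_erase (hf'.symm.trans hf.symm)⟩
    · exact absurd (hinj (mem_erase.mpr ⟨hp'q, hp'⟩) (mem_erase.mpr ⟨hq'q, hq'⟩) hf') hpq'

theorem exists_rel_of_card_le {P : Finset α} {T : Finset β} (R : α → β → Prop)
    (hcover : ∀ t ∈ T, ∃ p ∈ P, R p t) (hfun : ∀ p ∈ P, ∀ t t', R p t → R p t' → t = t')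
    (hcard : #P ≤ #T) : ∀ p ∈ P, ∃ t ∈ T, R p t := by
  choose g hgP hgR using hcover
  intro p hp
  obtain ⟨t, ht, rfl⟩ := surj_on_of_inj_on_of_card_le g hgP
    (fun t t' ht ht' h => hfun _ (hgP t ht) _ _ (hgR t ht) (h ▸ hgR t' ht')) hcard p hp
  exact ⟨t, ht, hgR t ht⟩

end Finset

namespace List

theorem sum_map_eq_sum_range_getD {α : Type*} (B : List α) (f : α → ℕ) (d : α) :
    (B.map f).sum = ∑ i ∈ Finset.range B.length, f (B.getD i d) := by
  induction B with
  | nil => simp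
  | cons l B ih => simp [Finset.sum_range_succ', ih, add_comm]

theorem lt_length_of_mem_getD {α : Type*} {B : List (List α)} {i : ℕ} {x : α}
    (h : x ∈ B.getD i []) : i < B.length := by
  by_contra hi
  rw [getD_eq_default _ _ (not_lt.mp hi)] at h
  exact not_mem_nil h

end List

section Entries

variable (B : List (List ℤ))

def blockEntries : Finset (Σ _ : ℕ, ℤ) :=
  (range B.length).sigma fun i => (B.getD i []).toFinset

def entryValue (t : ℤ) (p : Σ _ : ℕ, ℤ) : ℤ := p.2 - t * ((B.length - 1 - p.1 : ℕ) : ℤ)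

theorem toFinset_evolveGen (t : ℤ) :
    (evolveGen B t).toFinset = (blockEntries B).image (entryValue B t) := by
  ext v
  simp only [evolveGen, List.mem_toFinset, List.mem_flatten, List.mem_map,
    List.mem_zipIdx_iff_getElem?, Prod.exists, ↓existsAndEq, and_true, blockEntries,
    List.getD_eq_getElem?_getD, mem_image, mem_sigma, mem_range, entryValue, Sigma.exists]
  constructor
  · rintro ⟨l, i, hi, x, hx, rfl⟩
    exact ⟨i, x, ⟨(List.getElem?_eq_some_iff.mp hi).1, by simp [hi, hx]⟩, rfl⟩
  · rintro ⟨i, x, ⟨hi, hx⟩, rfl⟩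
    exact ⟨B[i], i, by simp [hi], x, by simpa [hi] using hx, rfl⟩

theorem length_evolveGen (t : ℤ) :
    (evolveGen B t).length = ∑ i ∈ range B.length, (B.getD i []).length := by
  have hlen : (List.length ∘ fun p : List ℤ × ℕ =>
      p.1.map fun x => x - t * ((B.length - 1 - p.2 : ℕ) : ℤ)) = List.length ∘ Prod.fst := by
    funext p
    simp
  rw [evolveGen, List.length_flatten, List.map_map, hlen, ← List.map_map, List.zipIdx_map_fst,
    List.sum_map_eq_sum_range_getD]

theorem dimGen_eq_sum : dimGen B =
    ∑ j ∈ range B.length, ∑ i ∈ range j, (B.getD i []).length * (B.getD j []).length := by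
  have h := sq_sum_range (fun i => (B.getD i []).length) B.length
  rw [dimGen, List.map_map, List.sum_map_eq_sum_range_getD (d := []),
    List.sum_map_eq_sum_range_getD (d := [])]
  simp only [Function.comp_apply] at h ⊢
  omega

variable {B}

theorem choose_two_le_dimGen (hB : ∀ l ∈ B, l ≠ []) : B.length.choose 2 ≤ dimGen B := by
  have hpos {i : ℕ} (hi : i < B.length) : 0 < (B.getD i []).length := by
    rw [List.getD_eq_getElem _ _ hi]
    exact List.length_pos_iff.mpr (hB _ (List.getElem_mem hi))
  calc B.length.choose 2 = ∑ j ∈ range B.length, ∑ i ∈ range j, 1 := by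
        simp [Finset.sum_range_id, Nat.choose_two_right]
    _ ≤ dimGen B := by
        rw [dimGen_eq_sum]
        refine sum_le_sum fun j hj => sum_le_sum fun i hi => ?_
        have hj := mem_range.mp hj
        exact Nat.mul_pos (hpos (by simp at hi; omega)) (hpos hj)

theorem nodup_getD_of_strictDec (h : StrictDec (evolveGen B 0)) (i : ℕ) :
    (B.getD i []).Nodup := by
  have hflat : evolveGen B 0 = B.flatten := by
    simp [evolveGen, List.zipIdx_map_fst]
  rw [StrictDec, hflat] at h
  replace h := List.isChain_iff_pairwise.mp h
  rcases lt_or_ge i B.length with hi | hi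
  · rw [List.getD_eq_getElem _ _ hi]
    exact (List.nodup_flatten.mp (h.imp ne_of_gt)).1 _ (List.getElem_mem hi)
  · rw [List.getD_eq_default _ _ hi]
    exact List.nodup_nil

theorem card_blockEntries (hnd : ∀ i, (B.getD i []).Nodup) :
    #(blockEntries B) = ∑ i ∈ range B.length, (B.getD i []).length := by
  rw [blockEntries, card_sigma]
  exact sum_congr rfl fun i _ => List.toFinset_card_of_nodup (hnd i)

theorem mem_blockEntries {i : ℕ} {x : ℤ} : ⟨i, x⟩ ∈ blockEntries B ↔ x ∈ B.getD i [] :=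
  ⟨fun h => List.mem_toFinset.mp (mem_sigma.mp h).2,
    fun h => mem_sigma.mpr ⟨mem_range.mpr (List.lt_length_of_mem_getD h), List.mem_toFinset.mpr h⟩⟩

theorem entryValue_eq_entryValue_iff {i j : ℕ} {x y t : ℤ} (hi : i < B.length)
    (hj : j < B.length) :
    entryValue B t ⟨i, x⟩ = entryValue B t ⟨j, y⟩ ↔ x - y = ((j : ℤ) - i) * t := by
  have hci : ((B.length - 1 - i : ℕ) : ℤ) = B.length - 1 - i := by omega
  have hcj : ((B.length - 1 - j : ℕ) : ℤ) = B.length - 1 - j := by omega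
  simp only [entryValue, hci, hcj]
  constructor <;> intro h <;> linear_combination h

end Entries

/-- Block `i` is `X i`; `x ∈ X i` and `y ∈ X j` with `i < j` collide at time `t` when
`x - y = (j - i) t`. -/
structure IsUlrichSystem (X : ℕ → Set ℤ) (N : ℤ) : Prop where
  collides {i j : ℕ} {x y : ℤ} : i < j → x ∈ X i → y ∈ X j →
    ∃ t, 1 ≤ t ∧ t ≤ N ∧ x - y = ((j : ℤ) - i) * t
  unique {i j i' j' : ℕ} {x y x' y' t : ℤ} : 1 ≤ t → t ≤ N →
    i < j → x ∈ X i → y ∈ X j → x - y = ((j : ℤ) - i) * t →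
    i' < j' → x' ∈ X i' → y' ∈ X j' → x' - y' = ((j' : ℤ) - i') * t →
    i = i' ∧ j = j' ∧ x = x' ∧ y = y'
  cover {t : ℤ} : 1 ≤ t → t ≤ N →
    ∃ i j x y, i < j ∧ x ∈ X i ∧ y ∈ X j ∧ x - y = ((j : ℤ) - i) * t

namespace IsUlrichGen

variable {B : List (List ℤ)} (h : IsUlrichGen B)
include h

theorem nonempty_block_iff (i : ℕ) :
    ({x | x ∈ B.getD i []} : Set ℤ).Nonempty ↔ i < B.length :=
  ⟨fun ⟨_, hx⟩ => List.lt_length_of_mem_getD hx, fun hi => List.exists_mem_of_ne_nil _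
    (by rw [List.getD_eq_getElem _ _ hi]; exact h.1 _ (List.getElem_mem hi))⟩

theorem card_image_entryValue_add_one {t : ℤ} (h1 : 1 ≤ t) (hN : t ≤ dimGen B) :
    #((blockEntries B).image (entryValue B t)) + 1 = #(blockEntries B) := by
  have hrep := h.2.2 t.toNat (by omega) (by omega)
  rw [Int.toNat_of_nonneg (by omega), OneRepeat, toFinset_evolveGen, length_evolveGen] at hrep
  rwa [card_blockEntries (nodup_getD_of_strictDec h.2.1)]

theorem cover {t : ℤ} (h1 : 1 ≤ t) (hN : t ≤ dimGen B) :
    ∃ i j x y, i < j ∧ x ∈ B.getD i [] ∧ y ∈ B.getD j [] ∧ x - y = ((j : ℤ) - i) * t := by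
  obtain ⟨⟨i, x⟩, hx, ⟨j, y⟩, hy, hne, hval⟩ :=
    exists_ne_map_eq_of_card_lt_of_maps_to (t := (blockEntries B).image (entryValue B t))
      (by have := h.card_image_entryValue_add_one h1 hN; omega)
      (fun p hp => mem_image_of_mem _ hp)
  rw [mem_blockEntries] at hx hy
  rw [entryValue_eq_entryValue_iff (List.lt_length_of_mem_getD hx)
    (List.lt_length_of_mem_getD hy)] at hval
  rcases lt_trichotomy i j with hij | rfl | hji
  · exact ⟨i, j, x, y, hij, hx, hy, hval⟩
  · exact absurd (by simp only [sub_self, zero_mul, sub_eq_zero] at hval; rw [hval]) hne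
  · exact ⟨j, i, y, x, hji, hy, hx, by linear_combination -hval⟩

theorem unique {i j i' j' : ℕ} {x y x' y' t : ℤ} (h1 : 1 ≤ t) (hN : t ≤ dimGen B)
    (hij : i < j) (hx : x ∈ B.getD i []) (hy : y ∈ B.getD j [])
    (hxy : x - y = ((j : ℤ) - i) * t) (hij' : i' < j') (hx' : x' ∈ B.getD i' [])
    (hy' : y' ∈ B.getD j' []) (hxy' : x' - y' = ((j' : ℤ) - i') * t) :
    i = i' ∧ j = j' ∧ x = x' ∧ y = y' := by
  have key := eq_or_eq_swap_of_card_image_add_one (h.card_image_entryValue_add_one h1 hN)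
    (mem_blockEntries.mpr hx) (mem_blockEntries.mpr hy) (fun e => hij.ne (congrArg Sigma.fst e))
    ((entryValue_eq_entryValue_iff (List.lt_length_of_mem_getD hx)
      (List.lt_length_of_mem_getD hy)).mpr hxy)
    (mem_blockEntries.mpr hx') (mem_blockEntries.mpr hy') (fun e => hij'.ne (congrArg Sigma.fst e))
    ((entryValue_eq_entryValue_iff (List.lt_length_of_mem_getD hx')
      (List.lt_length_of_mem_getD hy')).mpr hxy')
  simp only [Sigma.mk.injEq, heq_eq_eq] at key
  omega

theorem collides {i j : ℕ} {x y : ℤ} (hij : i < j) (hx : x ∈ B.getD i [])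
    (hy : y ∈ B.getD j []) : ∃ t : ℤ, 1 ≤ t ∧ t ≤ dimGen B ∧ x - y = ((j : ℤ) - i) * t := by
  let crossPairs := ((range B.length).sigma fun j => range j).sigma
    fun ji => (B.getD ji.2 []).toFinset ×ˢ (B.getD ji.1 []).toFinset
  have hmem {i j : ℕ} {x y : ℤ} (hij : i < j) (hx : x ∈ B.getD i []) (hy : y ∈ B.getD j []) :
      ⟨⟨j, i⟩, (x, y)⟩ ∈ crossPairs := by
    simp only [crossPairs, mem_sigma, mem_range, mem_product, List.mem_toFinset]
    exact ⟨⟨List.lt_length_of_mem_getD hy, hij⟩, hx, hy⟩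
  have hcard : #crossPairs = #(Icc 1 (dimGen B : ℤ)) := by
    rw [Int.card_Icc, add_sub_cancel_right, Int.toNat_natCast, dimGen_eq_sum, card_sigma,
      sum_sigma]
    refine sum_congr rfl fun j _ => sum_congr rfl fun i _ => ?_
    rw [card_product, List.toFinset_card_of_nodup (nodup_getD_of_strictDec h.2.1 _),
      List.toFinset_card_of_nodup (nodup_getD_of_strictDec h.2.1 _)]
  obtain ⟨t, ht, hxy⟩ := exists_rel_of_card_le (P := crossPairs)
    (fun q t => q.2.1 - q.2.2 = ((q.1.1 : ℤ) - q.1.2) * t)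
    (fun t ht => by
      obtain ⟨i, j, x, y, hij, hx, hy, hxy⟩ := h.cover (mem_Icc.mp ht).1 (mem_Icc.mp ht).2
      exact ⟨_, hmem hij hx hy, hxy⟩)
    (fun q hq t t' ht ht' => by
      have : (q.1.2 : ℤ) < q.1.1 := by simp [crossPairs] at hq; omega
      exact mul_left_cancel₀ (by omega) (ht.symm.trans ht'))
    hcard.le _ (hmem hij hx hy)
  exact ⟨t, (mem_Icc.mp ht).1, (mem_Icc.mp ht).2, hxy⟩

theorem isUlrichSystem : IsUlrichSystem (fun i => {x | x ∈ B.getD i []}) (dimGen B) :=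
  ⟨h.collides, h.unique, h.cover⟩

end IsUlrichGen

def reflectBlocks (s : ℕ) (X : ℕ → Set ℤ) (i : ℕ) : Set ℤ := {x | i < s ∧ -x ∈ X (s - 1 - i)}

theorem nonempty_reflectBlocks_iff {s : ℕ} {X : ℕ → Set ℤ} (hX : ∀ i, (X i).Nonempty ↔ i < s)
    (i : ℕ) : (reflectBlocks s X i).Nonempty ↔ i < s := by
  refine ⟨fun ⟨_, hi, _⟩ => hi, fun hi => ?_⟩
  obtain ⟨x, hx⟩ := (hX (s - 1 - i)).mpr (by omega)
  exact ⟨-x, hi, by rwa [neg_neg]⟩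

namespace IsUlrichSystem

variable {X : ℕ → Set ℤ} {N : ℤ} (S : IsUlrichSystem X N)
include S

theorem reflect {s : ℕ} (hX : ∀ i, (X i).Nonempty ↔ i < s) :
    IsUlrichSystem (reflectBlocks s X) N where
  collides := fun {i j x y} hij ⟨_, hx⟩ ⟨hj, hy⟩ => by
    obtain ⟨t, h1, hN, h⟩ := S.collides (show s - 1 - j < s - 1 - i by omega) hy hx
    have hgap : ((s - 1 - i : ℕ) : ℤ) - (s - 1 - j : ℕ) = j - i := by omega
    exact ⟨t, h1, hN, by rw [hgap] at h; linear_combination h⟩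
  unique := fun {i j i' j' x y x' y' t} h1 hN hij ⟨hi, hx⟩ ⟨hj, hy⟩ hxy hij' ⟨hi', hx'⟩
      ⟨hj', hy'⟩ hxy' => by
    have hgap : ((s - 1 - i : ℕ) : ℤ) - (s - 1 - j : ℕ) = j - i := by omega
    have hgap' : ((s - 1 - i' : ℕ) : ℤ) - (s - 1 - j' : ℕ) = j' - i' := by omega
    have := S.unique h1 hN (show s - 1 - j < s - 1 - i by omega) hy hx
      (by rw [hgap]; linear_combination hxy) (show s - 1 - j' < s - 1 - i' by omega) hy' hx'
      (by rw [hgap']; linear_combination hxy')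
    omega
  cover := fun {t} h1 hN => by
    obtain ⟨i, j, x, y, hij, hx, hy, hxy⟩ := S.cover h1 hN
    have hj := (hX j).mp ⟨y, hy⟩
    have hgap : ((s - 1 - i : ℕ) : ℤ) - (s - 1 - j : ℕ) = j - i := by omega
    refine ⟨s - 1 - j, s - 1 - i, -y, -x, by omega, ⟨by omega, ?_⟩, ⟨by omega, ?_⟩, ?_⟩
    · rwa [neg_neg, show s - 1 - (s - 1 - j) = j by omega]
    · rwa [neg_neg, show s - 1 - (s - 1 - i) = i by omega]
    · rw [hgap]
      linear_combination hxy

theorem adjacent_sub_bounds {i : ℕ} {x y : ℤ} (hx : x ∈ X i) (hy : y ∈ X (i + 1)) :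
    1 ≤ x - y ∧ x - y ≤ N := by
  obtain ⟨t, h1, hN, h⟩ := S.collides (Nat.lt_succ_self i) hx hy
  have : x - y = t := by rw [h]; push_cast; ring
  omega

theorem sub_ne_sub_of_ne {i i' : ℕ} {x y x' y' : ℤ} (hii' : i ≠ i') (hx : x ∈ X i)
    (hy : y ∈ X (i + 1)) (hx' : x' ∈ X i') (hy' : y' ∈ X (i' + 1)) : x - y ≠ x' - y' := by
  intro heq
  obtain ⟨h1, hN⟩ := S.adjacent_sub_bounds hx hy
  exact hii' (S.unique h1 hN (Nat.lt_succ_self i) hx hy (by push_cast; ring)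
    (Nat.lt_succ_self i') hx' hy' (by push_cast; rw [heq]; ring)).1

theorem two_dvd_sub_of_mem_add_two {i : ℕ} {x y : ℤ} (hx : x ∈ X i) (hy : y ∈ X (i + 2)) :
    2 ∣ x - y := by
  obtain ⟨t, -, -, h⟩ := S.collides (by omega) hx hy
  exact ⟨t, by rw [h]; push_cast; ring⟩

theorem succ_eq_of_extremal {i j : ℕ} {x y t : ℤ} (hij : i < j) (hx : x ∈ X i) (hy : y ∈ X j)
    (hxy : x - y = ((j : ℤ) - i) * t) (ht : t = 1 ∨ t = N) (hmid : (X (i + 1)).Nonempty) :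
    j = i + 1 := by
  by_contra hne
  obtain ⟨z, hz⟩ := hmid
  obtain ⟨t₁, h₁, hN₁, hxz⟩ := S.collides (Nat.lt_succ_self i) hx hz
  obtain ⟨t₂, h₂, hN₂, hzy⟩ := S.collides (show i + 1 < j by omega) hz hy
  set g : ℤ := (j : ℤ) - (i + 1)
  have hg : 1 ≤ g := by omega
  have hsum : t₁ + g * t₂ = (g + 1) * t := by
    push_cast at hxz hzy
    linear_combination hxy - hxz - hzy
  have ht₁₂ : t₁ = t ∧ t₂ = t := by
    rcases ht with rfl | rfl
    · constructor <;> nlinarith [mul_nonneg (sub_nonneg.mpr hg) (sub_nonneg.mpr h₂)]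
    · constructor <;> nlinarith [mul_nonneg (sub_nonneg.mpr hg) (sub_nonneg.mpr hN₂)]
  rw [ht₁₂.1] at hxz h₁ hN₁
  rw [ht₁₂.2] at hzy
  exact absurd (S.unique h₁ hN₁ (Nat.lt_succ_self i) hx hz hxz
    (show i + 1 < j by omega) hz hy hzy).1 (by omega)

theorem exists_adjacent_of_extremal {s : ℕ} (hX : ∀ i, (X i).Nonempty ↔ i < s) {t : ℤ}
    (hN : 1 ≤ N) (ht : t = 1 ∨ t = N) : ∃ i x y, x ∈ X i ∧ y ∈ X (i + 1) ∧ x - y = t := by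
  obtain ⟨i, j, x, y, hij, hx, hy, hxy⟩ := S.cover (t := t) (by omega) (by omega)
  have hj := (hX j).mp ⟨y, hy⟩
  obtain rfl := S.succ_eq_of_extremal hij hx hy hxy ht ((hX _).mpr (by omega))
  exact ⟨i, x, y, hx, hy, by rw [hxy]; push_cast; ring⟩

theorem interleaved_times_le {i : ℕ} {x y x' y' t t' : ℤ} (hx : x ∈ X i) (hy : y ∈ X (i + 2))
    (hx' : x' ∈ X (i + 1)) (hy' : y' ∈ X (i + 3)) (hxy : x - y = 2 * t)
    (hxy' : x' - y' = 2 * t') : 2 * t ≤ 2 * t' + N - 1 ∧ 2 * t' ≤ 2 * t + N - 1 := by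
  have := S.adjacent_sub_bounds hx hx'
  have := S.adjacent_sub_bounds hx' hy
  have := S.adjacent_sub_bounds hy hy'
  omega

section FourBlocks

variable (hX : ∀ i, (X i).Nonempty ↔ i < 4)
include hX

theorem sub_emod_two_of_adjacent (hN : 1 ≤ N) {i : ℕ} {x y : ℤ} (hx : x ∈ X i)
    (hy : y ∈ X (i + 1)) : (x - y) % 2 = 1 := by
  obtain ⟨a, ha⟩ := (hX 0).mpr (by norm_num)
  obtain ⟨b, hb⟩ := (hX 1).mpr (by norm_num)
  obtain ⟨c, hc⟩ := (hX 2).mpr (by norm_num)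
  obtain ⟨d, hd⟩ := (hX 3).mpr (by norm_num)
  have hac := S.two_dvd_sub_of_mem_add_two ha hc
  have hbd := S.two_dvd_sub_of_mem_add_two hb hd
  have hpar {i : ℕ} {x y : ℤ} (hx : x ∈ X i) (hy : y ∈ X (i + 1)) : 2 ∣ (x - y) - (a - b) := by
    have hi : i < 3 := Nat.succ_lt_succ_iff.mp ((hX (i + 1)).mp ⟨y, hy⟩)
    interval_cases i
    · have := S.two_dvd_sub_of_mem_add_two hx hc
      have := S.two_dvd_sub_of_mem_add_two hy hd
      omega
    · have := S.two_dvd_sub_of_mem_add_two hx hd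
      have := S.two_dvd_sub_of_mem_add_two ha hy
      omega
    · have := S.two_dvd_sub_of_mem_add_two ha hx
      have := S.two_dvd_sub_of_mem_add_two hb hy
      omega
  obtain ⟨i₁, x₁, y₁, hx₁, hy₁, h₁⟩ := S.exists_adjacent_of_extremal hX hN (Or.inl rfl)
  have := hpar hx₁ hy₁
  have := hpar hx hy
  omega

theorem emod_two_eq_one (hN : 1 ≤ N) : N % 2 = 1 := by
  obtain ⟨i, x, y, hx, hy, hxy⟩ := S.exists_adjacent_of_extremal hX hN (Or.inr rfl)
  exact hxy ▸ S.sub_emod_two_of_adjacent hX hN hx hy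

theorem exists_outer_pair_of_even (hN : 1 ≤ N) {t : ℤ} (h1 : 1 ≤ t) (htN : t ≤ N)
    (ht : 2 ∣ t) : ∃ i < 2, ∃ x ∈ X i, ∃ y ∈ X (i + 2), x - y = 2 * t := by
  obtain ⟨i, j, x, y, hij, hx, hy, hxy⟩ := S.cover h1 htN
  have hj := (hX j).mp ⟨y, hy⟩
  rcases (by omega : j = i + 1 ∨ j = i + 2 ∨ (i = 0 ∧ j = 3)) with rfl | rfl | ⟨rfl, rfl⟩
  · have := S.sub_emod_two_of_adjacent hX hN hx hy
    have : x - y = t := by rw [hxy]; push_cast; ring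
    omega
  · exact ⟨i, by omega, x, hx, y, hy, by rw [hxy]; push_cast; ring⟩
  · obtain ⟨c, hc⟩ := (hX 2).mpr (by norm_num)
    have := S.two_dvd_sub_of_mem_add_two hx hc
    have := S.sub_emod_two_of_adjacent hX hN hc hy
    norm_num at hxy
    omega

theorem false_of_outer_pairs_around_one (hN : 1 ≤ N) {x y x' y' : ℤ} (hx : x ∈ X 0)
    (hy : y ∈ X 2) (hxy : x - y = 2 * 2) (hx' : x' ∈ X 0) (hy' : y' ∈ X 2)
    (hxy' : x' - y' = 2 * (N - 1)) : False := by
  obtain ⟨b, hb⟩ := (hX 1).mpr (by norm_num)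
  obtain ⟨d, hd⟩ := (hX 3).mpr (by norm_num)
  -- `{x - b, b - y} = {1, 3}` and `{x' - b, b - y'} = {N - 2, N}`; the odd `y' - d` avoids
  -- `1` and `3`, which pushes `y - d` up to the time `N` already taken.
  have := S.adjacent_sub_bounds hx hb
  have := S.adjacent_sub_bounds hb hy
  have := S.adjacent_sub_bounds hx' hb
  have := S.adjacent_sub_bounds hb hy'
  have := S.adjacent_sub_bounds hy hd
  have := S.adjacent_sub_bounds hy' hd
  have := S.sub_ne_sub_of_ne (by norm_num) hx hb hb hy
  have := S.sub_ne_sub_of_ne (by norm_num) hx' hb hb hy'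
  have := S.sub_ne_sub_of_ne (by norm_num) hx hb hy' hd
  have := S.sub_ne_sub_of_ne (by norm_num) hb hy hy' hd
  have := S.sub_ne_sub_of_ne (by norm_num) hx' hb hy hd
  have := S.sub_ne_sub_of_ne (by norm_num) hb hy' hy hd
  have := S.sub_emod_two_of_adjacent hX hN hy' hd
  omega

theorem false_of_four_blocks (hN : 6 ≤ N) : False := by
  have hodd := S.emod_two_eq_one hX (by omega)
  obtain ⟨i, hi, x, hx, y, hy, hxy⟩ :=
    S.exists_outer_pair_of_even hX (by omega) (t := 2) (by norm_num) (by omega) (by norm_num)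
  obtain ⟨i', hi', x', hx', y', hy', hxy'⟩ :=
    S.exists_outer_pair_of_even hX (by omega) (t := N - 1) (by omega) (by omega) (by omega)
  interval_cases i <;> interval_cases i'
  · exact S.false_of_outer_pairs_around_one hX (by omega) hx hy hxy hx' hy' hxy'
  · have := S.interleaved_times_le hx hy hx' hy' hxy hxy'
    omega
  · have := S.interleaved_times_le hx' hy' hx hy hxy' hxy
    omega
  · refine (S.reflect hX).false_of_outer_pairs_around_one (nonempty_reflectBlocks_iff hX)
      (by omega) (x := -y) (y := -x) (x' := -y') (y' := -x') ?_ ?_ (by linarith) ?_ ?_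
      (by linarith)
    all_goals exact ⟨by norm_num, by simpa using ‹_›⟩

end FourBlocks

end IsUlrichSystem

/-- There are no Ulrich partitions with exactly 4 blocks. -/
theorem stmt4 (B : List (List ℤ)) (h4 : B.length = 4) : ¬ IsUlrichGen B := by
  intro hB
  have hN : (6 : ℤ) ≤ dimGen B := by
    have := choose_two_le_dimGen hB.1
    rw [h4] at this
    exact_mod_cast this
  exact hB.isUlrichSystem.false_of_four_blocks (h4 ▸ hB.nonempty_block_iff) hN
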